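/- Let d ≥ 1, L ≥ 2, R ≥ 1 with L ≥ 4R, and e ∈ ℝ^d with |e| = 1. Then ∫_{B_{3R}^c ∩ B_{3R}(Le)^c} |x|^{-d} |x - Le|^{-d} dx ≤ C(d) L^{-d} log(L/R). -/
import Mathlib
open MeasureTheory Metric Set

lemma aux_pt (d : ℕ) (L a b : ℝ) (ha : 0 < a) (hab : a ≤ b) (hL : L ≤ a + b) (hL0 : 0 < L) :
    a ^ (-(d:ℝ)) * b ^ (-(d:ℝ)) ≤ min ((2/L)^d * a ^ (-(d:ℝ))) (a ^ (-(2*(d:ℝ)))) := by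
  have hb : 0 < b := ha.trans_le hab
  have hbL : L/2 ≤ b := by linarith
  refine le_min ?_ ?_
  · have h1 : b ^ (-(d:ℝ)) ≤ (L/2) ^ (-(d:ℝ)) :=
      Real.rpow_le_rpow_of_nonpos (by linarith) hbL (neg_nonpos.mpr (Nat.cast_nonneg d))
    have h2 : (L/2) ^ (-(d:ℝ)) = (2/L)^d := by
      rw [Real.rpow_neg (by positivity), Real.rpow_natCast, ← inv_pow, inv_div]
    calc a ^ (-(d:ℝ)) * b ^ (-(d:ℝ)) ≤ a ^ (-(d:ℝ)) * (2/L)^d := by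
          exact mul_le_mul_of_nonneg_left (h1.trans_eq h2) (Real.rpow_nonneg ha.le _)
      _ = (2/L)^d * a ^ (-(d:ℝ)) := mul_comm _ _
  · have h1 : b ^ (-(d:ℝ)) ≤ a ^ (-(d:ℝ)) :=
      Real.rpow_le_rpow_of_nonpos ha hab (neg_nonpos.mpr (Nat.cast_nonneg d))
    calc a ^ (-(d:ℝ)) * b ^ (-(d:ℝ)) ≤ a ^ (-(d:ℝ)) * a ^ (-(d:ℝ)) := by
          exact mul_le_mul_of_nonneg_left h1 (Real.rpow_nonneg ha.le _)
      _ = a ^ (-(2*(d:ℝ))) := by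
          rw [← Real.rpow_add ha]; ring_nf

set_option maxHeartbeats 2000000 in
/-- ∫_{B_{3R}^c ∩ B_{3R}(Le)^c} |x|^{-d} |x-Le|^{-d} dx ≤ C(d) L^{-d} log(L/R). -/
theorem stmt5 (d : ℕ) (hd : 1 ≤ d) :
    ∃ C > 0, ∀ (R L : ℝ) (e : EuclideanSpace ℝ (Fin d)),
      1 ≤ R → 2 ≤ L → 4 * R ≤ L → ‖e‖ = 1 →
      ∫ x in {x : EuclideanSpace ℝ (Fin d) | x ∉ ball 0 (3 * R) ∧ x ∉ ball (L • e) (3 * R)},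
        ‖x‖ ^ (-(d : ℝ)) * ‖x - L • e‖ ^ (-(d : ℝ))
      ≤ C * L ^ (-(d : ℝ)) * Real.log (L / R) := by
  haveI : NeZero d := ⟨by omega⟩
  set E := EuclideanSpace ℝ (Fin d) with hE
  haveI : Nontrivial E := by
    have : 0 < Module.finrank ℝ (EuclideanSpace ℝ (Fin d)) := by
      rw [finrank_euclideanSpace_fin]; omega
    exact Module.nontrivial_of_finrank_pos this
  set V : ℝ := (volume (ball (0:E) 1)).toReal with hVdef
  have hV : 0 < V := ENNReal.toReal_pos (measure_ball_pos volume _ one_pos).ne'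
    measure_ball_lt_top.ne
  refine ⟨2^(d+2) * d * V, by positivity, ?_⟩
  intro R L e hR hL2 hRL he
  have hR0 : (0:ℝ) < R := by linarith
  have hL0 : (0:ℝ) < L := by linarith
  have h3R : (0:ℝ) < 3*R := by linarith
  have hLe : ‖(L • e : E)‖ = L := by
    rw [norm_smul, he, mul_one, Real.norm_eq_abs, abs_of_pos hL0]
  set g : ℝ → ℝ := fun r =>
    if 3*R ≤ r then min ((2/L)^d * r ^ (-(d:ℝ))) (r ^ (-(2*(d:ℝ)))) else 0 with hgdef
  have hg0 : ∀ r, 0 ≤ g r := by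
    intro r
    simp only [hgdef]
    split
    · have hr : (0:ℝ) ≤ r := le_trans h3R.le ‹_›
      exact le_min (by positivity) (Real.rpow_nonneg hr _)
    · exact le_refl 0
  have hgmeas : Measurable g :=
    Measurable.ite measurableSet_Ici (by fun_prop) measurable_const
  set h : E → ℝ := fun x => g ‖x‖ with hhdef
  have hhmeas : Measurable h := hgmeas.comp measurable_norm
  have hd1 : (1:ℝ) ≤ (d:ℝ) := by exact_mod_cast hd
  have h2d : (Module.finrank ℝ E : ℝ) < 2*(d:ℝ) := by
    rw [show Module.finrank ℝ E = d from finrank_euclideanSpace_fin]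
    linarith
  have hdom : Integrable (fun x : E => 2^(2*d) * (1+‖x‖) ^ (-(2*(d:ℝ)))) volume :=
    (integrable_one_add_norm h2d).const_mul _
  have hhint : Integrable h volume := by
    apply hdom.mono' hhmeas.aestronglyMeasurable
    refine ae_of_all _ fun x => ?_
    rw [Real.norm_eq_abs, abs_of_nonneg (hg0 _)]
    show g ‖x‖ ≤ _
    rw [hgdef]
    dsimp only
    split
    · rename_i hx
      have hx1 : (1:ℝ) ≤ ‖x‖ := le_trans (by linarith) hx
      have hx0 : (0:ℝ) < ‖x‖ := by linarith
      refine le_trans (min_le_right _ _) ?_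
      have hA : (2*‖x‖) ^ (-(2*(d:ℝ))) ≤ (1+‖x‖) ^ (-(2*(d:ℝ))) :=
        Real.rpow_le_rpow_of_nonpos (by positivity) (by linarith)
          (by rw [neg_nonpos]; positivity)
      have key : ‖x‖ ^ (-(2*(d:ℝ))) = 2^(2*d) * (2*‖x‖) ^ (-(2*(d:ℝ))) := by
        rw [Real.mul_rpow (by norm_num) (norm_nonneg x), ← mul_assoc,
          ← Real.rpow_natCast (2:ℝ) (2*d), ← Real.rpow_add (by norm_num : (0:ℝ) < 2)]
        push_cast
        norm_num
      rw [key]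
      exact mul_le_mul_of_nonneg_left hA (by positivity)
    · positivity
  have hτint : Integrable (fun x => h (x - L • e)) volume := hhint.comp_sub_right _
  set S : Set E := {x | x ∉ ball 0 (3*R) ∧ x ∉ ball (L • e) (3*R)} with hSdef
  have hS : MeasurableSet S :=
    (measurableSet_ball (x := (0:E)) (ε := 3*R)).compl.inter
      (measurableSet_ball (x := (L • e : E)) (ε := 3*R)).compl
  set f : E → ℝ := fun x => ‖x‖ ^ (-(d:ℝ)) * ‖x - L • e‖ ^ (-(d:ℝ)) with hfdef
  have hpt : ∀ x, S.indicator f x ≤ h x + h (x - L • e) := by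
    intro x
    by_cases hx : x ∈ S
    · rw [indicator_of_mem hx]
      obtain ⟨hx1, hx2⟩ := hx
      rw [mem_ball, dist_zero_right, not_lt] at hx1
      rw [mem_ball, dist_eq_norm, not_lt] at hx2
      have htri : L ≤ ‖x‖ + ‖x - L • e‖ := by
        have h1 := norm_sub_le x (x - L • e)
        rw [sub_sub_cancel, hLe] at h1
        linarith
      have hhx : h x = g ‖x‖ := rfl
      have hhx2 : h (x - L • e) = g ‖x - L • e‖ := rfl
      rcases le_total ‖x‖ ‖x - L • e‖ with hc | hc
      · have hkey := aux_pt d L ‖x‖ ‖x - L • e‖ (lt_of_lt_of_le h3R hx1) hc htri hL0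
        have hgx : g ‖x‖ = min ((2/L)^d * ‖x‖ ^ (-(d:ℝ))) (‖x‖ ^ (-(2*(d:ℝ)))) :=
          if_pos hx1
        calc f x ≤ min ((2/L)^d * ‖x‖ ^ (-(d:ℝ))) (‖x‖ ^ (-(2*(d:ℝ)))) := hkey
          _ = h x := by rw [hhx, hgx]
          _ ≤ h x + h (x - L • e) := le_add_of_nonneg_right (hg0 _)
      · have hkey := aux_pt d L ‖x - L • e‖ ‖x‖ (lt_of_lt_of_le h3R hx2) hc
          (by linarith) hL0
        have hgx : g ‖x - L • e‖ =
            min ((2/L)^d * ‖x - L • e‖ ^ (-(d:ℝ))) (‖x - L • e‖ ^ (-(2*(d:ℝ)))) :=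
          if_pos hx2
        calc f x = ‖x - L • e‖ ^ (-(d:ℝ)) * ‖x‖ ^ (-(d:ℝ)) := mul_comm _ _
          _ ≤ min ((2/L)^d * ‖x - L • e‖ ^ (-(d:ℝ))) (‖x - L • e‖ ^ (-(2*(d:ℝ)))) := hkey
          _ = h (x - L • e) := by rw [hhx2, hgx]
          _ ≤ h x + h (x - L • e) := le_add_of_nonneg_left (hg0 _)
    · rw [indicator_of_notMem hx]
      exact add_nonneg (hg0 _) (hg0 _)
  have step1 : (∫ x in S, f x) ≤ 2 * ∫ x, h x := by
    rw [← integral_indicator hS]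
    calc ∫ x, S.indicator f x
        ≤ ∫ x, (h x + h (x - L • e)) :=
          integral_mono_of_nonneg
            (ae_of_all _ fun x => indicator_nonneg
              (fun y _ => mul_nonneg (Real.rpow_nonneg (norm_nonneg _) _)
                (Real.rpow_nonneg (norm_nonneg _) _)) x)
            (hhint.add hτint) (ae_of_all _ hpt)
      _ = (∫ x, h x) + ∫ x, h (x - L • e) := integral_add hhint hτint
      _ = 2 * ∫ x, h x := by
          rw [integral_sub_right_eq_self h (L • e)]; ring
  have hpolar : (∫ x, h x) = (d:ℝ) * (V * ∫ y in Ioi (0:ℝ), y ^ (d-1) * g y) := by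
    have hp := MeasureTheory.integral_fun_norm_addHaar (volume : Measure E) g
    simp only [show Module.finrank ℝ E = d from finrank_euclideanSpace_fin,
      nsmul_eq_mul, smul_eq_mul] at hp
    exact hp
  -- 1D estimate
  have h3RL : 3*R ≤ L := by linarith
  set G : ℝ → ℝ := fun y =>
    (Icc (3*R) L).indicator (fun y => (2/L)^d * y⁻¹) y
      + (Ioi L).indicator (fun y => y ^ (-(d:ℝ)-1)) y with hGdef
  have hG1 : IntegrableOn (fun y : ℝ => (2/L)^d * y⁻¹) (Icc (3*R) L) := by
    apply ContinuousOn.integrableOn_compact isCompact_Icc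
    apply ContinuousOn.mul continuousOn_const
    apply ContinuousOn.inv₀ continuousOn_id
    intro y hy
    exact ne_of_gt (lt_of_lt_of_le h3R hy.1)
  have hG2 : IntegrableOn (fun y : ℝ => y ^ (-(d:ℝ)-1)) (Ioi L) :=
    integrableOn_Ioi_rpow_of_lt (by linarith) hL0
  have hGi1 : Integrable ((Icc (3*R) L).indicator (fun y => (2/L)^d * y⁻¹))
      (volume.restrict (Ioi (0:ℝ))) :=
    ((hG1.integrable_indicator measurableSet_Icc)).restrict
  have hGi2 : Integrable ((Ioi L).indicator (fun y : ℝ => y ^ (-(d:ℝ)-1)))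
      (volume.restrict (Ioi (0:ℝ))) :=
    ((hG2.integrable_indicator measurableSet_Ioi)).restrict
  have hGint : Integrable G (volume.restrict (Ioi (0:ℝ))) := hGi1.add hGi2
  have hGnn : ∀ y, 0 ≤ G y := by
    intro y
    apply add_nonneg
    · apply indicator_nonneg
      intro z hz
      have : (0:ℝ) < z := lt_of_lt_of_le h3R hz.1
      positivity
    · apply indicator_nonneg
      intro z hz
      have : (0:ℝ) < z := lt_trans hL0 hz
      positivity
  have hFG : ∀ y ∈ Ioi (0:ℝ), y ^ (d-1) * g y ≤ G y := by
    intro y hy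
    rw [mem_Ioi] at hy
    by_cases h3y : 3*R ≤ y
    · have hgy : g y = min ((2/L)^d * y ^ (-(d:ℝ))) (y ^ (-(2*(d:ℝ)))) := if_pos h3y
      by_cases hyL : y ≤ L
      · have heq : (y:ℝ) ^ (d-1) * ((2/L)^d * y ^ (-(d:ℝ))) = (2/L)^d * y⁻¹ := by
          rw [mul_left_comm, ← Real.rpow_natCast y (d-1), Nat.cast_sub hd, Nat.cast_one,
            ← Real.rpow_add hy]
          have hde : (d:ℝ) - 1 + -(d:ℝ) = -1 := by ring
          rw [hde, Real.rpow_neg_one]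
        calc y ^ (d-1) * g y ≤ y ^ (d-1) * ((2/L)^d * y ^ (-(d:ℝ))) := by
              exact mul_le_mul_of_nonneg_left (hgy ▸ min_le_left _ _) (by positivity)
          _ = (2/L)^d * y⁻¹ := heq
          _ = (Icc (3*R) L).indicator (fun y => (2/L)^d * y⁻¹) y := by
              rw [indicator_of_mem (mem_Icc.mpr ⟨h3y, hyL⟩)]
          _ ≤ G y := le_add_of_nonneg_right (indicator_nonneg
              (fun z hz => by
                have : (0:ℝ) < z := lt_trans hL0 hz
                positivity) y)
      · have hyL' : L < y := not_le.mp hyL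
        have heq : (y:ℝ) ^ (d-1) * (y ^ (-(2*(d:ℝ)))) = y ^ (-(d:ℝ)-1) := by
          rw [← Real.rpow_natCast y (d-1), Nat.cast_sub hd, Nat.cast_one,
            ← Real.rpow_add hy]
          congr 1
          ring
        calc y ^ (d-1) * g y ≤ y ^ (d-1) * (y ^ (-(2*(d:ℝ)))) := by
              exact mul_le_mul_of_nonneg_left (hgy ▸ min_le_right _ _) (by positivity)
          _ = y ^ (-(d:ℝ)-1) := heq
          _ = (Ioi L).indicator (fun y : ℝ => y ^ (-(d:ℝ)-1)) y := by
              rw [indicator_of_mem (mem_Ioi.mpr hyL')]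
          _ ≤ G y := le_add_of_nonneg_left (indicator_nonneg
              (fun z hz => by
                have : (0:ℝ) < z := lt_of_lt_of_le h3R hz.1
                positivity) y)
    · have hgy : g y = 0 := if_neg h3y
      rw [hgy, mul_zero]
      exact hGnn y
  have hInt1 : (∫ y in Ioi (0:ℝ), y ^ (d-1) * g y) ≤ ∫ y in Ioi (0:ℝ), G y := by
    apply integral_mono_of_nonneg
    · filter_upwards [ae_restrict_mem measurableSet_Ioi] with y hy
      rw [mem_Ioi] at hy
      exact mul_nonneg (by positivity) (hg0 y)
    · exact hGint
    · filter_upwards [ae_restrict_mem measurableSet_Ioi] with y hy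
      exact hFG y hy
  have hGval : (∫ y in Ioi (0:ℝ), G y)
      = (2/L)^d * Real.log (L/(3*R)) + L ^ (-(d:ℝ))/(d:ℝ) := by
    rw [hGdef]
    rw [integral_add hGi1 hGi2]
    congr 1
    · rw [setIntegral_indicator measurableSet_Icc]
      have hsub : Ioi (0:ℝ) ∩ Icc (3*R) L = Icc (3*R) L :=
        inter_eq_self_of_subset_right (fun y hy => lt_of_lt_of_le h3R hy.1)
      have h0m : (0:ℝ) ∉ Set.uIcc (3*R) L := by
        rw [Set.uIcc_of_le h3RL]
        rintro ⟨hz1, hz2⟩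
        linarith
      rw [hsub, MeasureTheory.integral_const_mul, integral_Icc_eq_integral_Ioc,
        ← intervalIntegral.integral_of_le h3RL, integral_inv h0m]
    · rw [setIntegral_indicator measurableSet_Ioi]
      have hsub : Ioi (0:ℝ) ∩ Ioi L = Ioi L :=
        inter_eq_self_of_subset_right (Ioi_subset_Ioi hL0.le)
      rw [hsub, integral_Ioi_rpow_of_lt (by linarith) hL0]
      have he1 : (-(d:ℝ)-1) + 1 = -(d:ℝ) := by ring
      rw [he1, neg_div_neg_eq]
  -- final arithmetic
  have hlog3 : Real.log (L/(3*R)) ≤ Real.log (L/R) := by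
    apply Real.log_le_log (by positivity)
    gcongr
    · linarith
  have hl1 : 1 ≤ Real.log (L/R) := by
    rw [Real.le_log_iff_exp_le (by positivity)]
    calc Real.exp 1 ≤ 2.7182818286 := Real.exp_one_lt_d9.le
      _ ≤ 4 := by norm_num
      _ ≤ L/R := by rw [le_div_iff₀ hR0]; linarith
  have hP : (0:ℝ) < L ^ (-(d:ℝ)) := Real.rpow_pos_of_pos hL0 _
  have h2L : ((2/L):ℝ)^d = 2^d * L ^ (-(d:ℝ)) := by
    rw [div_pow, Real.rpow_neg hL0.le, Real.rpow_natCast]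
    ring
  have h4 : (4:ℝ) ≤ 2^(d+1) := by
    calc (4:ℝ) = 2^2 := by norm_num
      _ ≤ 2^(d+1) := pow_le_pow_right₀ one_le_two (by omega)
  have hdne : (d:ℝ) ≠ 0 := by positivity
  set P : ℝ := L ^ (-(d:ℝ)) with hPdef
  set l : ℝ := Real.log (L/R) with hldef
  calc (∫ x in S, f x) ≤ 2 * ∫ x, h x := step1
    _ = 2 * ((d:ℝ) * (V * ∫ y in Ioi (0:ℝ), y ^ (d-1) * g y)) := by rw [hpolar]
    _ ≤ 2 * ((d:ℝ) * (V * ((2/L)^d * Real.log (L/(3*R)) + P/(d:ℝ)))) := by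
        have := hInt1.trans_eq hGval
        gcongr
    _ ≤ 2 * ((d:ℝ) * (V * ((2/L)^d * l + P/(d:ℝ)))) := by
        have h2Lnn : (0:ℝ) ≤ (2/L)^d := by positivity
        gcongr
    _ = 2^(d+1) * ((d:ℝ)*V) * P * l + 2*V*P := by
        rw [h2L]
        field_simp
        ring
    _ ≤ 2^(d+1) * ((d:ℝ)*V) * P * l + 2*V*P*l := by
        nlinarith [mul_pos hV hP]
    _ ≤ 2^(d+2) * (d:ℝ) * V * P * l := by
        have hl0 : (0:ℝ) < l := lt_of_lt_of_le one_pos hl1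
        have h24 : (2:ℝ) ≤ 2^(d+1)*(d:ℝ) := by
          nlinarith [mul_nonneg (by linarith : (0:ℝ) ≤ (2:ℝ)^(d+1)-4)
            (by linarith : (0:ℝ) ≤ (d:ℝ)-1)]
        have hVPl : (0:ℝ) ≤ V*P*l := by positivity
        have hkey := mul_le_mul_of_nonneg_right h24 hVPl
        have hpow : (2:ℝ)^(d+2) = 2 * 2^(d+1) := by ring
        nlinarith [hkey]
    _ = 2^(d+2) * (d:ℝ) * V * P * l := rfl
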